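/- Let C be a cubical category and f a morphism of rank k. Then f has exactly k distinct first factors and k distinct last factors; concretely, in the poset category of a simplicial fan, for σ ⊆ τ with dim τ − dim σ = k and τ = cone{σ, v₁,…,v_k}, the first factors of f_{στ} are the k morphisms σ → cone{σ, v_i}, and σ equals the intersection of the k codimension-1 faces λ_i = cone{σ, v₁,…,v̂_i,…,v_k} of τ containing σ, i.e. σ = ⋂_{i=1}^{k} λ_i. -/

import Mathlib

open Submodule Set

namespace LinearIndependent

variable {R M ι : Type*} [Semiring R] [AddCommMonoid M] [Module R M] {v : ι → M}

theorem mem_span_image_iff [Nontrivial R] (hv : LinearIndependent R v) {s : Set ι} {a : ι} :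
    v a ∈ span R (v '' s) ↔ a ∈ s :=
  ⟨not_imp_not.1 hv.notMem_span_image, fun ha => subset_span (mem_image_of_mem v ha)⟩

/-- Since coefficients are unique, a vector lies in every `span R (v '' s i)` only if its
coefficient vector is supported in every `s i`. -/
theorem iInf_span_image {κ : Sort*} [Nonempty κ] (hv : LinearIndependent R v) (s : κ → Set ι) :
    ⨅ i, span R (v '' s i) = span R (v '' ⋂ i, s i) := by
  refine le_antisymm (fun x hx => ?_) (le_iInf fun i => span_mono (image_mono (iInter_subset s i)))
  simp only [mem_iInf, Finsupp.mem_span_image_iff_linearCombination] at hx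
  choose l hl hlx using hx
  obtain ⟨i₀⟩ := ‹Nonempty κ›
  have hl_eq (i : κ) : l i = l i₀ := hv ((hlx i).trans (hlx i₀).symm)
  refine (Finsupp.mem_span_image_iff_linearCombination R).2 ⟨l i₀, ?_, hlx i₀⟩
  exact (Finsupp.mem_supported R _).2 <| subset_iInter fun i =>
    (Finsupp.mem_supported R _).1 (hl_eq i ▸ hl i)

end LinearIndependent

theorem LinearIndependent.restrict_scalars_nonneg {R M ι : Type*} [Semiring R] [PartialOrder R]
    [IsOrderedRing R] [AddCommMonoid M] [Module R M] {v : ι → M} (hv : LinearIndependent R v) :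
    LinearIndependent {c : R // 0 ≤ c} v :=
  hv.restrict_scalars fun a b h => Subtype.ext (by simpa [← Nonneg.coe_smul] using h)

theorem stmt18_general {n k : ℕ} {ι : Type} (hk : 0 < k)
    (w : ι ⊕ Fin k → EuclideanSpace ℝ (Fin n))
    (hindep : LinearIndependent ℝ w) :
    (∀ i j : Fin k,
      Submodule.span {c : ℝ // 0 ≤ c}
          (Set.range (w ∘ Sum.inl) ∪ {w (Sum.inr i)}) =
        Submodule.span {c : ℝ // 0 ≤ c}
          (Set.range (w ∘ Sum.inl) ∪ {w (Sum.inr j)}) → i = j) ∧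
    (⨅ i : Fin k, Submodule.span {c : ℝ // 0 ≤ c}
        (Set.range w \ {w (Sum.inr i)})) =
      Submodule.span {c : ℝ // 0 ≤ c} (Set.range (w ∘ Sum.inl)) := by
  have hw := hindep.restrict_scalars_nonneg
  have : Nonempty (Fin k) := ⟨⟨0, hk⟩⟩
  have hσ : range (w ∘ Sum.inl) = w '' range Sum.inl := range_comp w Sum.inl
  refine ⟨fun i j h => ?_, ?_⟩
  · have hj : w (Sum.inr j) ∈ span {c : ℝ // 0 ≤ c} (w '' (range Sum.inl ∪ {Sum.inr i})) := by
      rw [image_union, image_singleton, ← hσ, h]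
      exact subset_span (mem_union_right _ rfl)
    simpa [eq_comm] using hw.mem_span_image_iff.1 hj
  · have hface (i : Fin k) : range w \ {w (Sum.inr i)} = w '' {Sum.inr i}ᶜ := by
      rw [← image_univ, ← image_singleton, ← image_sdiff hindep.injective, compl_eq_univ_sdiff]
    simp_rw [hface, hw.iInf_span_image, hσ]
    congr 2
    ext (a | a) <;> simp

/-- In the poset category of a simplicial fan, a morphism `σ → τ` of rank
`k` (where `τ = cone{σ, v₁,…,v_k}` with `w ∘ Sum.inl` the generators of `σ` and
`v_i = w (Sum.inr i)`) has `k` distinct first factors `σ → cone{σ, v_i}`, and `σ` is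
recovered from the `k` last factors as the intersection of the codimension-1 faces
`λ_i = cone{σ, v₁,…,v̂_i,…,v_k}`: `σ = ⋂_{i=1}^k λ_i`. -/
theorem stmt18 {n k : ℕ} {ι : Type} [Fintype ι] (hk : 0 < k)
    (w : ι ⊕ Fin k → EuclideanSpace ℝ (Fin n))
    (hindep : LinearIndependent ℝ w) :
    (∀ i j : Fin k,
      Submodule.span {c : ℝ // 0 ≤ c}
          (Set.range (w ∘ Sum.inl) ∪ {w (Sum.inr i)}) =
        Submodule.span {c : ℝ // 0 ≤ c}
          (Set.range (w ∘ Sum.inl) ∪ {w (Sum.inr j)}) → i = j) ∧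
    (⨅ i : Fin k, Submodule.span {c : ℝ // 0 ≤ c}
        (Set.range w \ {w (Sum.inr i)})) =
      Submodule.span {c : ℝ // 0 ≤ c} (Set.range (w ∘ Sum.inl)) :=
  stmt18_general hk w hindep
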